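/- Let η : ℝ → ℝ be a C¹ convex function with η(z) = 0 for z ≤ 0, and define q(z, w) = ∫_w^z η'(s − w) b'(s) ds where b'(s) = (p−1)|s|^{p−2} with p ≥ 2. Then for all z₁, z₂, w ∈ ℝ: q(z₁, w) − q(z₂, w) ≥ η'(z₂ − w) (b(z₁) − b(z₂)). -/

import Mathlib

open Real intervalIntegral

private lemma bderiv (p : ℝ) (hp : 2 ≤ p) (x : ℝ) :
    HasDerivAt (fun y : ℝ => |y| ^ (p - 2) * y) ((p - 1) * |x| ^ (p - 2)) x := by
  rcases lt_trichotomy x 0 with hx | hx | hx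
  · -- x < 0
    have h1 : HasDerivAt (fun y : ℝ => -((-y) ^ (p - 1))) ((p - 1) * (-x) ^ (p - 2)) x := by
      have h2 : HasDerivAt (fun y : ℝ => (-y) ^ (p - 1))
          ((p - 1) * (-x) ^ (p - 1 - 1) * (-1)) x :=
        (Real.hasDerivAt_rpow_const (p := p - 1) (Or.inl (by linarith))).comp x
          (hasDerivAt_neg x)
      have := h2.neg
      refine this.congr_deriv ?_
      rw [show p - 1 - 1 = p - 2 by ring]; ring
    rw [show |x| = -x from abs_of_neg hx]
    refine h1.congr_of_eventuallyEq ?_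
    filter_upwards [Iio_mem_nhds hx] with y hy
    have hy' : |y| = -y := abs_of_neg hy
    rw [hy']
    rw [show p - 1 = (p - 2) + 1 by ring, Real.rpow_add_one (by simpa using ne_of_lt hy)]
    ring
  · -- x = 0
    subst hx
    rcases eq_or_lt_of_le hp with hp2 | hp2
    · -- p = 2
      have : (fun y : ℝ => |y| ^ (p - 2) * y) = fun y : ℝ => y := by
        funext y; rw [← hp2]; simp
      rw [this, ← hp2]
      have h1 : ((2:ℝ) - 1) * |(0:ℝ)| ^ ((2:ℝ) - 2) = 1 := by
        norm_num
      rw [h1]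
      exact hasDerivAt_id' 0
    · -- p > 2
      have hz : |(0 : ℝ)| ^ (p - 2) = 0 := by
        rw [abs_zero, Real.zero_rpow (by linarith)]
      rw [hz, mul_zero]
      rw [hasDerivAt_iff_tendsto_slope]
      have hcont : Filter.Tendsto (fun y : ℝ => |y| ^ (p - 2)) (nhds 0) (nhds 0) := by
        have : ContinuousAt (fun y : ℝ => |y| ^ (p - 2)) 0 := by
          have h1 : ContinuousAt (fun t : ℝ => t ^ (p - 2)) (|0| : ℝ) :=
            Real.continuousAt_rpow_const _ _ (Or.inr (by linarith))
          exact h1.comp continuous_abs.continuousAt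
        have h2 : ((0:ℝ)) ^ (p - 2) = 0 :=
          Real.zero_rpow (ne_of_gt (by linarith))
        simpa [h2] using this.tendsto
      refine (hcont.mono_left nhdsWithin_le_nhds).congr' ?_
      filter_upwards [self_mem_nhdsWithin] with y hy
      have hy : y ≠ 0 := hy
      simp [slope, hz, hy, mul_comm, mul_div_assoc]
  · -- x > 0
    have h1 : HasDerivAt (fun y : ℝ => y ^ (p - 1)) ((p - 1) * x ^ (p - 1 - 1)) x :=
      Real.hasDerivAt_rpow_const (Or.inl (ne_of_gt hx))
    have h1' : HasDerivAt (fun y : ℝ => y ^ (p - 1)) ((p - 1) * |x| ^ (p - 2)) x := by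
      rw [abs_of_pos hx]
      rwa [show p - 1 - 1 = p - 2 by ring] at h1
    refine h1'.congr_of_eventuallyEq ?_
    filter_upwards [Ioi_mem_nhds hx] with y hy
    rw [abs_of_pos hy, show p - 1 = (p - 2) + 1 by ring,
      Real.rpow_add_one (ne_of_gt hy)]

theorem sub_differential_inequality (p : ℝ) (hp : 2 ≤ p)
    (η : ℝ → ℝ) (hη : ContDiff ℝ 1 η) (hconv : ConvexOn ℝ Set.univ η)
    (h0 : ∀ z : ℝ, z ≤ 0 → η z = 0) (z₁ z₂ w : ℝ) :
    (∫ s in w..z₁, deriv η (s - w) * ((p - 1) * |s| ^ (p - 2))) -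
      (∫ s in w..z₂, deriv η (s - w) * ((p - 1) * |s| ^ (p - 2)))
    ≥ deriv η (z₂ - w) * (|z₁| ^ (p - 2) * z₁ - |z₂| ^ (p - 2) * z₂) := by
  set c := deriv η (z₂ - w) with hc
  set g : ℝ → ℝ := fun s => deriv η (s - w) * ((p - 1) * |s| ^ (p - 2)) with hgdef
  set b : ℝ → ℝ := fun x => |x| ^ (p - 2) * x with hbdef
  -- monotonicity of deriv η
  have hdiff : Differentiable ℝ η := hη.differentiable one_ne_zero
  have hmono : Monotone (deriv η) := by
    have := hconv.monotoneOn_deriv (fun x _ => hdiff.differentiableAt)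
    intro a b' hab
    exact this (Set.mem_univ a) (Set.mem_univ b') hab
  -- deriv η vanishes on negatives
  have hzero : ∀ t : ℝ, t < 0 → deriv η t = 0 := by
    intro t ht
    have heq : η =ᶠ[nhds t] (fun _ => (0 : ℝ)) := by
      filter_upwards [Iio_mem_nhds ht] with y hy
      exact h0 y (le_of_lt hy)
    rw [heq.deriv_eq]
    simp
  have hnn : ∀ t : ℝ, 0 ≤ deriv η t := by
    intro t
    rcases lt_or_ge t 0 with ht | ht
    · rw [hzero t ht]
    · have := hmono (show (-1 : ℝ) ≤ t by linarith)
      rwa [hzero (-1) (by norm_num)] at this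
  -- continuity of g
  have hcd : Continuous (deriv η) := hη.continuous_deriv le_rfl
  have habs : Continuous fun s : ℝ => |s| ^ (p - 2) :=
    continuous_abs.rpow_const fun x => Or.inr (by linarith)
  have hg : Continuous g :=
    (hcd.comp (continuous_id.sub continuous_const)).mul (continuous_const.mul habs)
  -- the auxiliary function H
  set H : ℝ → ℝ := fun x => (∫ s in w..x, g s) - c * b x with hHdef
  have hH : ∀ x : ℝ, HasDerivAt H ((deriv η (x - w) - c) * ((p - 1) * |x| ^ (p - 2))) x := by
    intro x
    have h1 : HasDerivAt (fun u => ∫ s in w..u, g s) (g x) x :=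
      intervalIntegral.integral_hasDerivAt_right (hg.intervalIntegrable _ _)
        (hg.stronglyMeasurableAtFilter _ _) hg.continuousAt
    have h2 : HasDerivAt (fun u => c * b u) (c * ((p - 1) * |x| ^ (p - 2))) x :=
      (bderiv p hp x).const_mul c
    have := h1.sub h2
    refine this.congr_deriv ?_
    simp only [hgdef]
    ring
  have hb'nn : ∀ x : ℝ, 0 ≤ (p - 1) * |x| ^ (p - 2) :=
    fun x => mul_nonneg (by linarith) (Real.rpow_nonneg (abs_nonneg x) _)
  -- key: H z₂ ≤ H z₁
  have key : H z₂ ≤ H z₁ := by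
    rcases le_total z₂ z₁ with h | h
    · have hmonoH : MonotoneOn H (Set.Icc z₂ z₁) := by
        apply monotoneOn_of_deriv_nonneg (convex_Icc _ _)
          (fun x _ => (hH x).continuousAt.continuousWithinAt)
          (fun x _ => (hH x).differentiableAt.differentiableWithinAt)
        intro x hx
        rw [interior_Icc] at hx
        rw [(hH x).deriv]
        apply mul_nonneg _ (hb'nn x)
        have : c ≤ deriv η (x - w) := hmono (by have := hx.1; linarith)
        linarith
      exact hmonoH (Set.left_mem_Icc.2 h) (Set.right_mem_Icc.2 h) h
    · have hantH : AntitoneOn H (Set.Icc z₁ z₂) := by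
        apply antitoneOn_of_deriv_nonpos (convex_Icc _ _)
          (fun x _ => (hH x).continuousAt.continuousWithinAt)
          (fun x _ => (hH x).differentiableAt.differentiableWithinAt)
        intro x hx
        rw [interior_Icc] at hx
        rw [(hH x).deriv]
        apply mul_nonpos_of_nonpos_of_nonneg _ (hb'nn x)
        have : deriv η (x - w) ≤ c := hmono (by have := hx.2; linarith)
        linarith
      exact hantH (Set.left_mem_Icc.2 h) (Set.right_mem_Icc.2 h) h
  simp only [hHdef, hbdef] at key
  linarith
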